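/- The function J̌ is coercive on M_T: for every M > 0 there exists R > 0 such that every tuple (Σ_{ρ_0},…,Σ_{ρ_{T−1}}) ∈ M_T with max_{0 ≤ k ≤ T−1} ‖Σ_{ρ_k}‖_F > R satisfies J̌(Σ_{ρ_0},…,Σ_{ρ_{T−1}}) > M. -/

import Mathlib

open Matrix Filter Topology

/-- The unique symmetric positive semidefinite square root of a positive
semidefinite real matrix (junk value `0` if the matrix is not PSD). -/
noncomputable def msqrt {d : ℕ} (X : Matrix (Fin d) (Fin d) ℝ) :
    Matrix (Fin d) (Fin d) ℝ :=
  letI := Classical.propDecidable X.PosSemidef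
  if h : X.PosSemidef then
    (h.1.eigenvectorUnitary : Matrix (Fin d) (Fin d) ℝ) *
      diagonal ((↑) ∘ (√·) ∘ h.1.eigenvalues) *
      (star h.1.eigenvectorUnitary : Matrix (Fin d) (Fin d) ℝ)
  else 0

/-- The Frobenius norm of a real square matrix. -/
noncomputable def frob {d : ℕ} (X : Matrix (Fin d) (Fin d) ℝ) : ℝ :=
  Real.sqrt (∑ i, ∑ j, X i j ^ 2)

/-- Data of the mutual information optimal control problem for a discrete-time
linear system `x_{k+1} = A_k x_k + B_k u_k + w_k`. -/
structure LQData (n m : ℕ) where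
  ε : ℝ
  A : ℕ → Matrix (Fin n) (Fin n) ℝ
  B : ℕ → Matrix (Fin n) (Fin m) ℝ
  R : ℕ → Matrix (Fin m) (Fin m) ℝ
  F : Matrix (Fin n) (Fin n) ℝ
  Sw : ℕ → Matrix (Fin n) (Fin n) ℝ
  Sini : Matrix (Fin n) (Fin n) ℝ

namespace LQData

variable {n m : ℕ} (P : LQData n m) (T : ℕ) (Srho : ℕ → Matrix (Fin m) (Fin m) ℝ)

/-- The backward Riccati recursion `Π_k` associated with the prior covariances
`Σ_{ρ_k}`: `Π_T = F` and
`Π_k = A_kᵀ Π_{k+1} A_k − (1/ε) A_kᵀ Π_{k+1} B_k Σ^{1/2} (I + Σ^{1/2} C_k Σ^{1/2})⁻¹ Σ^{1/2} B_kᵀ Π_{k+1} A_k`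
with `C_k = (R_k + B_kᵀ Π_{k+1} B_k)/ε`. -/
noncomputable def Ric (k : ℕ) : Matrix (Fin n) (Fin n) ℝ :=
  if h : T ≤ k then P.F
  else
    let Pk := Ric (k + 1)
    let S := msqrt (Srho k)
    let C := (1 / P.ε) • (P.R k + (P.B k)ᵀ * Pk * P.B k)
    (P.A k)ᵀ * Pk * P.A k -
      (1 / P.ε) • ((P.A k)ᵀ * Pk * P.B k * S * (1 + S * C * S)⁻¹ * S * (P.B k)ᵀ * Pk * P.A k)
termination_by T - k
decreasing_by omega

/-- `C_k = (R_k + B_kᵀ Π_{k+1} B_k)/ε`. -/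
noncomputable def Ck (k : ℕ) : Matrix (Fin m) (Fin m) ℝ :=
  (1 / P.ε) • (P.R k + (P.B k)ᵀ * P.Ric T Srho (k + 1) * P.B k)

/-- `Σ_{Q_k} = ε (R_k + B_kᵀ Π_{k+1} B_k)⁻¹`. -/
noncomputable def SigQ (k : ℕ) : Matrix (Fin m) (Fin m) ℝ :=
  P.ε • (P.R k + (P.B k)ᵀ * P.Ric T Srho (k + 1) * P.B k)⁻¹

/-- Covariance `Σ_{π_k}` of the optimal policy for the fixed prior. -/
noncomputable def SigPi (k : ℕ) : Matrix (Fin m) (Fin m) ℝ :=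
  msqrt (Srho k) * (1 + msqrt (Srho k) * P.Ck T Srho k * msqrt (Srho k))⁻¹ * msqrt (Srho k)

/-- Feedback gain `P_k = −(1/ε) Σ_{π_k} B_kᵀ Π_{k+1} A_k`. -/
noncomputable def Pgain (k : ℕ) : Matrix (Fin m) (Fin n) ℝ :=
  -((1 / P.ε) • (P.SigPi T Srho k * (P.B k)ᵀ * P.Ric T Srho (k + 1) * P.A k))

/-- Forward state covariance recursion under the optimal policy. -/
noncomputable def Sigx : ℕ → Matrix (Fin n) (Fin n) ℝ
  | 0 => P.Sini
  | k + 1 =>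
    (P.A k + P.B k * P.Pgain T Srho k) * Sigx k *
        (P.A k + P.B k * P.Pgain T Srho k)ᵀ +
      P.B k * P.SigPi T Srho k * (P.B k)ᵀ + P.Sw k

/-- The standard LQR Riccati recursion `Π̌_k`. -/
noncomputable def RicLQR (k : ℕ) : Matrix (Fin n) (Fin n) ℝ :=
  if h : T ≤ k then P.F
  else
    let Pk := RicLQR (k + 1)
    (P.A k)ᵀ * Pk * P.A k -
      (P.A k)ᵀ * Pk * P.B k * (P.R k + (P.B k)ᵀ * Pk * P.B k)⁻¹ * (P.B k)ᵀ * Pk * P.A k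
termination_by T - k
decreasing_by omega

/-- `Π̂_k = A_kᵀ ⋯ A_{T−1}ᵀ F A_{T−1} ⋯ A_k`. -/
noncomputable def RicHat (k : ℕ) : Matrix (Fin n) (Fin n) ℝ :=
  if h : T ≤ k then P.F
  else (P.A k)ᵀ * RicHat (k + 1) * P.A k
termination_by T - k
decreasing_by omega

/-- `Σ_{w_{k−1}}` with the convention `Σ_{w_{−1}} := Σ_{x_ini}`. -/
noncomputable def Swm1 (k : ℕ) : Matrix (Fin n) (Fin n) ℝ :=
  if k = 0 then P.Sini else P.Sw (k - 1)

/-- The matrix `M̌_k` from the sufficient condition for stochastic optimal policies. -/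
noncomputable def Mcheck (k : ℕ) : Matrix (Fin m) (Fin m) ℝ :=
  (P.R k + (P.B k)ᵀ * P.RicHat T (k + 1) * P.B k)⁻¹ *
      ((P.B k)ᵀ * P.RicLQR T (k + 1) * P.A k * P.Swm1 k * (P.A k)ᵀ *
        P.RicLQR T (k + 1) * P.B k) *
      (P.R k + (P.B k)ᵀ * P.RicHat T (k + 1) * P.B k)⁻¹ -
    P.ε • (P.R k + (P.B k)ᵀ * P.RicLQR T (k + 1) * P.B k)⁻¹

/-- State covariance under the zero control input. -/
noncomputable def SigxZero : ℕ → Matrix (Fin n) (Fin n) ℝ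
  | 0 => P.Sini
  | k + 1 => P.A k * SigxZero k * (P.A k)ᵀ + P.Sw k

/-- The matrix `M̂_k^zero` from the sufficient condition for deterministic optimal policies. -/
noncomputable def MhatZero (k : ℕ) : Matrix (Fin m) (Fin m) ℝ :=
  (P.R k + (P.B k)ᵀ * P.RicLQR T (k + 1) * P.B k)⁻¹ *
      ((P.B k)ᵀ * P.RicHat T (k + 1) * P.A k * P.SigxZero k * (P.A k)ᵀ *
        P.RicHat T (k + 1) * P.B k) *
      (P.R k + (P.B k)ᵀ * P.RicLQR T (k + 1) * P.B k)⁻¹ -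
    P.ε • (P.R k + (P.B k)ᵀ * P.RicHat T (k + 1) * P.B k)⁻¹


/-- The backward recursion `r_k` for the mean offset:
`r_T = 0` and `r_k = A_k⁻¹ r_{k+1} − Π_k⁻¹ A_kᵀ Π_{k+1} B_k (I + Σ_{ρ_k} C_k)⁻¹ μ_{ρ_k}`. -/
noncomputable def rvec (μ : ℕ → Fin m → ℝ) (k : ℕ) : Fin n → ℝ :=
  if h : T ≤ k then 0
  else
    ((P.A k)⁻¹).mulVec (rvec μ (k + 1)) -
      ((P.Ric T Srho k)⁻¹ * ((P.A k)ᵀ * P.Ric T Srho (k + 1) * P.B k *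
        (1 + Srho k * P.Ck T Srho k)⁻¹)).mulVec (μ k)
termination_by T - k
decreasing_by omega

/-- `Θ_k = ε C_k − ε C_k Σ_{π_k} C_k − (I − C_k Σ_{π_k}) B_kᵀ Π_{k+1} A_k Π_k⁻¹ A_kᵀ Π_{k+1} B_k (I − Σ_{π_k} C_k)`. -/
noncomputable def Theta (k : ℕ) : Matrix (Fin m) (Fin m) ℝ :=
  P.ε • P.Ck T Srho k - P.ε • (P.Ck T Srho k * P.SigPi T Srho k * P.Ck T Srho k) -
    (1 - P.Ck T Srho k * P.SigPi T Srho k) *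
      ((P.B k)ᵀ * P.Ric T Srho (k + 1) * P.A k * (P.Ric T Srho k)⁻¹ *
        ((P.A k)ᵀ * P.Ric T Srho (k + 1) * P.B k)) *
      (1 - P.SigPi T Srho k * P.Ck T Srho k)

end LQData

/-- Extend a `T`-tuple of matrices to a function on `ℕ` (by zero). -/
def extT {m : ℕ} (T : ℕ) (σ : Fin T → Matrix (Fin m) (Fin m) ℝ) :
    ℕ → Matrix (Fin m) (Fin m) ℝ :=
  fun k => if h : k < T then σ ⟨k, h⟩ else 0


/-- Extend a `T`-tuple of vectors to a function on `ℕ` (by zero). -/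
def extV {m : ℕ} (T : ℕ) (μ : Fin T → Fin m → ℝ) : ℕ → Fin m → ℝ :=
  fun k => if h : k < T then μ ⟨k, h⟩ else 0

namespace LQData

variable {n m : ℕ} (P : LQData n m) (T : ℕ)

/-- The reduced objective `J̌` as a function of the `T`-tuple of prior covariances. -/
noncomputable def Jcheck (σ : Fin T → Matrix (Fin m) (Fin m) ℝ) : ℝ :=
  (1 / 2) * ((P.Ric T (extT T σ) 0 * P.Sini).trace +
    ∑ k : Fin T,
      (P.ε * Real.log ((extT T σ k + P.SigQ T (extT T σ) k).det / (P.SigQ T (extT T σ) k).det) +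
        (P.Ric T (extT T σ) (k + 1) * P.Sw k).trace))

/-- `L_k = (Σ_{Q_k} + Σ_{ρ_k})⁻¹`. -/
noncomputable def Lmat (Srho : ℕ → Matrix (Fin m) (Fin m) ℝ) (k : ℕ) :
    Matrix (Fin m) (Fin m) ℝ :=
  (P.SigQ T Srho k + Srho k)⁻¹

/-- `E_k = (1/ε) Σ_{Q_k} B_kᵀ Π_{k+1} A_k`. -/
noncomputable def Emat (Srho : ℕ → Matrix (Fin m) (Fin m) ℝ) (k : ℕ) :
    Matrix (Fin m) (Fin n) ℝ :=
  (1 / P.ε) • (P.SigQ T Srho k * (P.B k)ᵀ * P.Ric T Srho (k + 1) * P.A k)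

/-- `J̌'_k = (ε/2) L_k (Σ_{ρ_k} + Σ_{Q_k} − E_k Σ_{x_k} E_kᵀ) L_k`. -/
noncomputable def Jprime (Srho : ℕ → Matrix (Fin m) (Fin m) ℝ) (k : ℕ) :
    Matrix (Fin m) (Fin m) ℝ :=
  (P.ε / 2) • (P.Lmat T Srho k *
    (Srho k + P.SigQ T Srho k - P.Emat T Srho k * P.Sigx T Srho k * (P.Emat T Srho k)ᵀ) *
    P.Lmat T Srho k)

/-- The alternating-optimization update map `𝒯` on `T`-tuples of prior covariances:
`𝒯(σ)_k = Σ_{π_k} + P_k Σ_{x_k} P_kᵀ`. -/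
noncomputable def Tmap (σ : Fin T → Matrix (Fin m) (Fin m) ℝ) :
    Fin T → Matrix (Fin m) (Fin m) ℝ :=
  fun k =>
    P.SigPi T (extT T σ) k +
      P.Pgain T (extT T σ) k * P.Sigx T (extT T σ) k * (P.Pgain T (extT T σ) k)ᵀ

/-- The objective `J` as a function of the prior means, for fixed prior covariances:
`J(μ) = (1/2)( r_0ᵀ Π_0 r_0 + Σ_k μ_{ρ_k}ᵀ Θ_k μ_{ρ_k} )`. -/
noncomputable def Jmean (Srho : ℕ → Matrix (Fin m) (Fin m) ℝ) (μ : Fin T → Fin m → ℝ) : ℝ :=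
  (1 / 2) *
    (P.rvec T Srho (extV T μ) 0 ⬝ᵥ (P.Ric T Srho 0).mulVec (P.rvec T Srho (extV T μ) 0) +
      ∑ k : Fin T, μ k ⬝ᵥ (P.Theta T Srho k).mulVec (μ k))

end LQData

open Matrix Filter Topology LQData

/-!
Every Riccati matrix `Π_k` is positive semidefinite, being a congruence of a Schur complement, so
all trace terms of `J̌` are nonnegative. Choose `c > 0` with `c I ≤ R_k` for all `k`; then
`Σ_{Q_k}⁻¹ ≥ (c/ε) I`, and with `Y = (Σ_{Q_k}⁻¹)^{1/2}` the Weinstein–Aronszajn identity gives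
`det(Σ_{ρ_k} + Σ_{Q_k}) / det Σ_{Q_k} = det(I + Y Σ_{ρ_k} Y) ≥ 1 + tr(Σ_{Q_k}⁻¹ Σ_{ρ_k})
≥ 1 + (c/ε) tr Σ_{ρ_k}`. Hence `2 J̌ ≥ ε log(1 + (c/ε) tr Σ_{ρ_k})` for every `k`, and
`‖Σ_{ρ_k}‖_F ≤ tr Σ_{ρ_k}` for positive semidefinite `Σ_{ρ_k}`.
-/

open scoped MatrixOrder

theorem Finset.one_add_sum_le_prod_one_add {ι : Type*} (s : Finset ι) {f : ι → ℝ}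
    (hf : ∀ i ∈ s, 0 ≤ f i) : 1 + ∑ i ∈ s, f i ≤ ∏ i ∈ s, (1 + f i) := by
  induction s using Finset.cons_induction with
  | empty => simp
  | cons a s ha ih =>
    rw [Finset.sum_cons, Finset.prod_cons]
    have hfa := hf a (Finset.mem_cons_self a s)
    have hs := ih fun i hi => hf i (Finset.mem_cons_of_mem hi)
    have := Finset.sum_nonneg fun i hi => hf i (Finset.mem_cons_of_mem hi)
    nlinarith

namespace Matrix

variable {ι κ : Type*} [Fintype ι] [DecidableEq ι] [Fintype κ]

theorem IsHermitian.trace_cfc {A : Matrix ι ι ℝ} (hA : A.IsHermitian) (f : ℝ → ℝ) :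
    (cfc f A).trace = ∑ i, f (hA.eigenvalues i) := by
  rw [hA.cfc_eq, IsHermitian.cfc, Unitary.conjStarAlgAut_apply, trace_mul_cycle,
    Unitary.coe_star_mul_self, Matrix.one_mul, trace_diagonal]
  rfl

theorem PosSemidef.trace_mul_self_le_sq_trace {X : Matrix ι ι ℝ} (hX : X.PosSemidef) :
    (X * X).trace ≤ X.trace ^ 2 := by
  rw [← sq, ← cfc_pow_id (R := ℝ) X 2 hX.1.isSelfAdjoint, hX.1.trace_cfc,
    hX.1.trace_eq_sum_eigenvalues]
  exact Finset.sum_sq_le_sq_sum_of_nonneg fun i _ => hX.eigenvalues_nonneg i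

theorem PosSemidef.one_add_trace_le_det_one_add {X : Matrix ι ι ℝ} (hX : X.PosSemidef) :
    1 + X.trace ≤ (1 + X).det := by
  have h : 1 + X = cfc (fun x : ℝ => 1 + x) X := by
    rw [cfc_const_add (1 : ℝ) (fun x => x) X, cfc_id' ℝ X, Algebra.algebraMap_eq_smul_one,
      one_smul]
  rw [h, hX.1.cfc_eq]
  simp only [IsHermitian.cfc, det_map, det_diagonal, Function.comp_apply,
    RCLike.ofReal_real_eq_id, id, hX.1.trace_eq_sum_eigenvalues]
  exact Finset.univ.one_add_sum_le_prod_one_add fun i _ => hX.eigenvalues_nonneg i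

theorem PosSemidef.trace_mul_nonneg {A B : Matrix ι ι ℝ} (hA : A.PosSemidef)
    (hB : B.PosSemidef) : 0 ≤ (A * B).trace := by
  have hB0 : 0 ≤ B := hB.nonneg
  rw [← CFC.sqrt_mul_sqrt_self B, ← Matrix.mul_assoc, trace_mul_cycle]
  have hsymm : (CFC.sqrt B)ᵀ = CFC.sqrt B := (CFC.sqrt_nonneg B).posSemidef.1
  simpa [hsymm] using (hA.conjTranspose_mul_mul_same (CFC.sqrt B)).trace_nonneg

theorem PosSemidef.mul_trace_le_trace_mul {A S : Matrix ι ι ℝ} {c : ℝ} (hcA : c • 1 ≤ A)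
    (hS : S.PosSemidef) : c * S.trace ≤ (A * S).trace := by
  have := PosSemidef.trace_mul_nonneg (le_iff.1 hcA) hS
  rwa [Matrix.sub_mul, trace_sub, Matrix.smul_mul, Matrix.one_mul, trace_smul, smul_eq_mul,
    sub_nonneg] at this

theorem PosDef.exists_pos_smul_one_le {A : Matrix ι ι ℝ} (hA : A.PosDef) :
    ∃ c : ℝ, 0 < c ∧ c • 1 ≤ A := by
  cases isEmpty_or_nonempty ι
  · exact ⟨1, one_pos, le_of_eq (Subsingleton.elim _ _)⟩
  · obtain ⟨c, hc, hle⟩ := (CFC.exists_pos_algebraMap_le_iff hA.isHermitian.isSelfAdjoint).2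
      fun x hx => (isStrictlyPositive_iff_posDef.2 hA).spectrum_pos hx
    exact ⟨c, hc, by rwa [Algebra.algebraMap_eq_smul_one] at hle⟩

theorem exists_pos_forall_smul_one_le (A : ℕ → Matrix ι ι ℝ) (T : ℕ)
    (hA : ∀ k < T, (A k).PosDef) :
    ∃ c : ℝ, 0 < c ∧ ∀ k < T, c • 1 ≤ A k := by
  have hev : ∀ k ∈ {k | k < T}, ∀ᶠ c in 𝓝[>] (0 : ℝ), c • 1 ≤ A k := fun k hk => by
    obtain ⟨c₀, hc₀, hle⟩ := (hA k hk).exists_pos_smul_one_le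
    filter_upwards [Ioo_mem_nhdsGT hc₀] with c hc
    exact (smul_le_smul_of_nonneg_right hc.2.le PosSemidef.one.nonneg).trans hle
  obtain ⟨c, hcA, hc⟩ := (((eventually_all_finite (Set.finite_lt_nat T)).2 hev).and
    self_mem_nhdsWithin).exists
  exact ⟨c, hc, hcA⟩

theorem PosDef.one_add_trace_inv_mul_le_det_add_div {Q S : Matrix ι ι ℝ} (hQ : Q.PosDef)
    (hS : S.PosSemidef) : 1 + (Q⁻¹ * S).trace ≤ (S + Q).det / Q.det := by
  set Y := CFC.sqrt Q⁻¹
  have hY : Y * Y = Q⁻¹ := CFC.sqrt_mul_sqrt_self _ hQ.inv.posSemidef.nonneg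
  have hYsymm : Yᵀ = Y := (CFC.sqrt_nonneg Q⁻¹).posSemidef.1
  have hX : (Y * S * Y).PosSemidef := by
    simpa [hYsymm] using hS.mul_mul_conjTranspose_same Y
  have hdet : (S + Q).det = Q.det * (1 + Y * S * Y).det := by
    have hQQ : Q * Q⁻¹ = 1 := Q.mul_nonsing_inv (isUnit_iff_isUnit_det _ |>.1 hQ.isUnit)
    rw [det_one_add_mul_comm, ← Matrix.mul_assoc, hY, ← det_mul,
      Matrix.mul_add, Matrix.mul_one, ← Matrix.mul_assoc, hQQ, Matrix.one_mul, add_comm]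
  have htrace : (Y * S * Y).trace = (Q⁻¹ * S).trace := by
    rw [trace_mul_cycle, ← hY, Matrix.mul_assoc]
  rw [le_div_iff₀ hQ.det_pos, hdet, ← htrace, mul_comm]
  exact mul_le_mul_of_nonneg_left hX.one_add_trace_le_det_one_add hQ.det_pos.le

theorem posSemidef_sub_mul_inv_add_mul [DecidableEq κ] {Pi : Matrix κ κ ℝ} {D : Matrix ι ι ℝ}
    (W : Matrix κ ι ℝ) (hPi : Pi.PosSemidef) (hD : D.PosDef) :
    (Pi - Pi * W * (D + Wᵀ * Pi * W)⁻¹ * (Wᵀ * Pi)).PosSemidef := by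
  have hPiW : (Pi * W)ᴴ = Wᵀ * Pi := by
    rw [conjTranspose_mul, hPi.1.eq, conjTranspose_eq_transpose_of_trivial]
  have hE : (D + Wᵀ * Pi * W).PosDef := by
    have := hD.add_posSemidef (hPi.conjTranspose_mul_mul_same W)
    rwa [conjTranspose_eq_transpose_of_trivial] at this
  let := hE.isUnit.invertible
  have hschur := PosDef.fromBlocks₂₂ Pi (Pi * W) hE
  rw [hPiW] at hschur
  rw [← hschur]
  set U : Matrix κ (κ ⊕ ι) ℝ := fromCols 1 W
  set V : Matrix ι (κ ⊕ ι) ℝ := fromCols 0 1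
  have hblocks : fromBlocks Pi (Pi * W) (Wᵀ * Pi) (D + Wᵀ * Pi * W) =
      Uᴴ * Pi * U + Vᴴ * D * V := by
    simp only [U, V, conjTranspose_fromCols_eq_fromRows_conjTranspose, fromRows_mul,
      mul_fromCols]
    ext (i | i) (j | j) <;> simp [conjTranspose_eq_transpose_of_trivial, Matrix.mul_assoc, add_comm]
  rw [hblocks]
  exact (hPi.conjTranspose_mul_mul_same U).add (hD.posSemidef.conjTranspose_mul_mul_same V)

theorem posSemidef_riccati_step [DecidableEq κ] {Pi : Matrix κ κ ℝ} {R S : Matrix ι ι ℝ}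
    (B : Matrix κ ι ℝ) {ε : ℝ} (hε : 0 < ε) (hPi : Pi.PosSemidef) (hR : R.PosSemidef)
    (hS : S.IsHermitian) :
    (Pi - (1 / ε) • (Pi * B * S * (1 + S * ((1 / ε) • (R + Bᵀ * Pi * B)) * S)⁻¹ * S * Bᵀ *
      Pi)).PosSemidef := by
  set X := 1 + S * ((1 / ε) • (R + Bᵀ * Pi * B)) * S
  have hSt : Sᵀ = S := hS
  have hSCS : ∀ {C : Matrix ι ι ℝ}, C.PosSemidef → (S * C * S).PosSemidef := fun hC => by
    simpa [conjTranspose_eq_transpose_of_trivial, hSt] using hC.conjTranspose_mul_mul_same S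
  have hBPB : (Bᵀ * Pi * B).PosSemidef := by
    simpa [conjTranspose_eq_transpose_of_trivial] using hPi.conjTranspose_mul_mul_same B
  have hX : X.PosDef := PosDef.one.add_posSemidef (hSCS ((hR.add hBPB).smul (by positivity)))
  have hD : (ε • 1 + S * R * S).PosDef := (PosDef.one.smul hε).add_posSemidef (hSCS hR)
  -- rescaling by `ε` turns `X` into `D + Wᵀ Pi W` with `W = B S` and `D = ε + S R S`
  have hεX : ε • X = ε • 1 + S * R * S + (B * S)ᵀ * Pi * (B * S) := by
    simp only [X, smul_add, Matrix.mul_smul, Matrix.smul_mul, smul_smul, mul_one_div_cancel hε.ne',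
      one_smul, Matrix.mul_add, Matrix.add_mul, transpose_mul, hSt, Matrix.mul_assoc,
      add_assoc]
  have hinv : (ε • X)⁻¹ = (1 / ε) • X⁻¹ := by
    refine inv_eq_left_inv ?_
    rw [Matrix.smul_mul, Matrix.mul_smul, smul_smul, one_div_mul_cancel hε.ne', one_smul,
      nonsing_inv_mul _ ((isUnit_iff_isUnit_det _).1 hX.isUnit)]
  have := posSemidef_sub_mul_inv_add_mul (B * S) hPi hD
  rw [← hεX, hinv, transpose_mul, hSt] at this
  simpa only [Matrix.mul_smul, Matrix.smul_mul, Matrix.mul_assoc] using this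

end Matrix

theorem frob_le_trace {d : ℕ} {X : Matrix (Fin d) (Fin d) ℝ} (hX : X.PosSemidef) :
    frob X ≤ X.trace := by
  have hsum : ∑ i, ∑ j, X i j ^ 2 = (X * X).trace := by
    simp only [trace, diag_apply, mul_apply, sq]
    refine Finset.sum_congr rfl fun i _ => Finset.sum_congr rfl fun j _ => ?_
    rw [← hX.1.apply i j, star_trivial]
  rw [frob, hsum, Real.sqrt_le_left hX.trace_nonneg]
  exact hX.trace_mul_self_le_sq_trace

theorem isHermitian_msqrt {d : ℕ} (X : Matrix (Fin d) (Fin d) ℝ) : (msqrt X).IsHermitian := by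
  unfold msqrt
  split
  · exact isHermitian_mul_mul_conjTranspose _ (isHermitian_diagonal _)
  · exact isHermitian_zero

namespace LQData

variable {n m : ℕ} (P : LQData n m) (T : ℕ) (Srho : ℕ → Matrix (Fin m) (Fin m) ℝ)

theorem Ric_posSemidef (hε : 0 < P.ε) (hR : ∀ k < T, (P.R k).PosSemidef)
    (hF : P.F.PosSemidef) (k : ℕ) : (P.Ric T Srho k).PosSemidef := by
  rw [Ric]
  split_ifs with hk
  · exact hF
  · have hstep := posSemidef_riccati_step (P.B k) hε (Ric_posSemidef hε hR hF (k + 1))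
      (hR k (by omega)) (isHermitian_msqrt (Srho k))
    convert hstep.conjTranspose_mul_mul_same (P.A k) using 1
    simp only [conjTranspose_eq_transpose_of_trivial, Matrix.mul_sub, Matrix.sub_mul,
      Matrix.mul_smul, Matrix.smul_mul, Matrix.mul_assoc]
termination_by T - k

variable {P T Srho} {k : ℕ}

theorem SigQ_posDef (hε : 0 < P.ε) (hR : (P.R k).PosDef)
    (hPi : (P.Ric T Srho (k + 1)).PosSemidef) : (P.SigQ T Srho k).PosDef :=
  (hR.add_posSemidef (hPi.conjTranspose_mul_mul_same (P.B k))).inv.smul hε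

theorem smul_one_le_inv_SigQ (hε : 0 < P.ε) (hR : (P.R k).PosDef)
    (hPi : (P.Ric T Srho (k + 1)).PosSemidef) {c : ℝ} (hc : c • 1 ≤ P.R k) :
    (c / P.ε) • 1 ≤ (P.SigQ T Srho k)⁻¹ := by
  set G := P.R k + (P.B k)ᵀ * P.Ric T Srho (k + 1) * P.B k
  have hBPB := hPi.conjTranspose_mul_mul_same (P.B k)
  have hG : G.PosDef := hR.add_posSemidef hBPB
  have hinv : (P.SigQ T Srho k)⁻¹ = P.ε⁻¹ • G := by
    refine inv_eq_left_inv ?_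
    rw [SigQ, Matrix.smul_mul, Matrix.mul_smul, smul_smul, inv_mul_cancel₀ hε.ne', one_smul,
      mul_nonsing_inv _ ((isUnit_iff_isUnit_det _).1 hG.isUnit)]
  rw [hinv, div_eq_inv_mul, ← smul_smul]
  exact smul_le_smul_of_nonneg_left (le_add_of_le_of_nonneg hc hBPB.nonneg)
    (inv_nonneg.2 hε.le)

theorem log_one_add_trace_le_stage_cost (hε : 0 < P.ε) (hR : (P.R k).PosDef)
    (hPi : (P.Ric T Srho (k + 1)).PosSemidef) (hSw : (P.Sw k).PosSemidef) {c : ℝ}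
    (hc0 : 0 ≤ c) (hc : c • 1 ≤ P.R k) (hS : (Srho k).PosSemidef) :
    P.ε * Real.log (1 + c / P.ε * (Srho k).trace) ≤
      P.ε * Real.log ((Srho k + P.SigQ T Srho k).det / (P.SigQ T Srho k).det) +
        (P.Ric T Srho (k + 1) * P.Sw k).trace := by
  have htrace := (smul_one_le_inv_SigQ hε hR hPi hc).mul_trace_le_trace_mul hS
  have hdet := (SigQ_posDef hε hR hPi).one_add_trace_inv_mul_le_det_add_div hS
  have hlog : Real.log (1 + c / P.ε * (Srho k).trace) ≤
      Real.log ((Srho k + P.SigQ T Srho k).det / (P.SigQ T Srho k).det) :=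
    Real.log_le_log (by have := hS.trace_nonneg; positivity) (by linarith)
  linarith [mul_le_mul_of_nonneg_left hlog hε.le, hPi.trace_mul_nonneg hSw]

theorem log_one_add_trace_le_two_mul_Jcheck (hε : 0 < P.ε) (hR : ∀ k < T, (P.R k).PosDef)
    (hSw : ∀ k < T, (P.Sw k).PosSemidef) (hF : P.F.PosSemidef) (hSini : P.Sini.PosSemidef)
    {c : ℝ} (hc0 : 0 ≤ c) (hc : ∀ k < T, c • 1 ≤ P.R k)
    (σ : Fin T → Matrix (Fin m) (Fin m) ℝ) (hσ : ∀ k, (σ k).PosSemidef) (k : Fin T) :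
    P.ε * Real.log (1 + c / P.ε * (σ k).trace) ≤ 2 * P.Jcheck T σ := by
  have hPi := P.Ric_posSemidef T (extT T σ) hε (fun k hk => (hR k hk).posSemidef) hF
  have hext : ∀ j : Fin T, extT T σ j = σ j := fun j => dif_pos j.2
  have hstage : ∀ j : Fin T, P.ε * Real.log (1 + c / P.ε * (σ j).trace) ≤
      P.ε * Real.log ((extT T σ j + P.SigQ T (extT T σ) j).det / (P.SigQ T (extT T σ) j).det) +
        (P.Ric T (extT T σ) (j + 1) * P.Sw j).trace := fun j => by
    rw [← hext j]
    exact log_one_add_trace_le_stage_cost hε (hR j j.2) (hPi _) (hSw j j.2) hc0 (hc j j.2)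
      (hext j ▸ hσ j)
  have hlog_nonneg : ∀ j : Fin T, 0 ≤ P.ε * Real.log (1 + c / P.ε * (σ j).trace) := fun j =>
    mul_nonneg hε.le <| Real.log_nonneg <|
      le_add_of_nonneg_right (by have := (hσ j).trace_nonneg; positivity)
  have hsum := Finset.single_le_sum (fun j _ => (hlog_nonneg j).trans (hstage j))
    (Finset.mem_univ k)
  rw [Jcheck]
  linarith [hstage k, (hPi 0).trace_mul_nonneg hSini]

end LQData

theorem jcheck_coercive_general {n m : ℕ} (T : ℕ)
    (P : LQData n m) (hε : 0 < P.ε)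
    (hR : ∀ k < T, (P.R k).PosDef) (hSw : ∀ k < T, (P.Sw k).PosDef)
    (hF : P.F.PosDef) (hSini : P.Sini.PosDef) :
    ∀ M : ℝ, 0 < M → ∃ Rad : ℝ, 0 < Rad ∧
      ∀ σ : Fin T → Matrix (Fin m) (Fin m) ℝ, (∀ k, (σ k).PosSemidef) →
        (∃ k, Rad < frob (σ k)) → M < P.Jcheck T σ := by
  intro M _
  obtain ⟨c, hc, hcR⟩ := Matrix.exists_pos_forall_smul_one_le P.R T hR
  refine ⟨P.ε / c * Real.exp (2 * M / P.ε), by positivity, ?_⟩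
  rintro σ hσ ⟨k, hk⟩
  have htrace : P.ε / c * Real.exp (2 * M / P.ε) < (σ k).trace :=
    hk.trans_le (frob_le_trace (hσ k))
  have hlog : 2 * M < P.ε * Real.log (1 + c / P.ε * (σ k).trace) := by
    rw [← div_lt_iff₀' hε, Real.lt_log_iff_exp_lt (by have := (hσ k).trace_nonneg; positivity)]
    calc Real.exp (2 * M / P.ε) = c / P.ε * (P.ε / c * Real.exp (2 * M / P.ε)) := by
          field_simp
      _ < c / P.ε * (σ k).trace := by gcongr
      _ < 1 + c / P.ε * (σ k).trace := lt_one_add _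
  linarith [P.log_one_add_trace_le_two_mul_Jcheck hε hR (fun k hk => (hSw k hk).posSemidef)
    hF.posSemidef hSini.posSemidef hc.le hcR σ hσ k]

theorem jcheck_coercive {n m : ℕ} (hn : 1 ≤ n) (hm : 1 ≤ m) (T : ℕ) (hT : 1 ≤ T)
    (P : LQData n m) (hε : 0 < P.ε)
    (hR : ∀ k < T, (P.R k).PosDef) (hSw : ∀ k < T, (P.Sw k).PosDef)
    (hF : P.F.PosDef) (hSini : P.Sini.PosDef) :
    ∀ M : ℝ, 0 < M → ∃ Rad : ℝ, 0 < Rad ∧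
      ∀ σ : Fin T → Matrix (Fin m) (Fin m) ℝ, (∀ k, (σ k).PosSemidef) →
        (∃ k, Rad < frob (σ k)) → M < P.Jcheck T σ :=
  jcheck_coercive_general T P hε hR hSw hF hSini
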